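/- arXiv:0906.2014 — 3 statements merged into one kernel-verified Lean document; each statement's English description precedes it below -/
import Mathlib

section
/- Let g be a finite-dimensional simple Lie algebra over ℂ and A a commutative associative unital ℂ-algebra. Then every Lie ideal of the Lie algebra g ⊗ A (with bracket [x⊗a, y⊗b] = [x,y]⊗ab) is of the form g ⊗ S for some ideal S of A. -/
/-!
By Burnside's theorem (Schur's lemma and Jacobson density over `ℂ`), the operators `ad x` generate
`End g` as an associative algebra, so a Lie ideal `I` of `A ⊗ g` is stable under `id ⊗ f` for every
linear `f : g → g`. Expanding `z ∈ I` along a basis `(eᵢ)` of `g` and applying `id ⊗ (eᵢ* ⊗ v)`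
shows that every coefficient `aᵢ` of `z` satisfies `aᵢ ⊗ g ⊆ I`. The set `S` of such `a` is an
ideal because `⁅b ⊗ x, a ⊗ y⁆ = b a ⊗ ⁅x, y⁆` and `g` is not abelian, and `I = g ⊗ S`.
-/

open TensorProduct

/-- The current Lie algebra `g ⊗ A` (realized as `A ⊗[ℂ] g`) is a complex Lie algebra. -/
noncomputable instance currentLieAlgebra (A : Type*) [CommRing A] [Algebra ℂ A]
    (g : Type*) [LieRing g] [LieAlgebra ℂ g] : LieAlgebra ℂ (A ⊗[ℂ] g) where
  lie_smul t x y := by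
    rw [← algebraMap_smul A t y, lie_smul, algebraMap_smul]

theorem IsSimpleModule.lsmul_surjective_of_isAlgClosed (k : Type*) {A V : Type*} [Field k]
    [IsAlgClosed k] [Ring A] [Algebra k A] [AddCommGroup V] [Module k V] [Module A V]
    [IsScalarTower k A V] [IsSimpleModule A V] [FiniteDimensional k V] :
    Function.Surjective (Algebra.lsmul k k V : A →ₐ[k] Module.End k V) := by
  classical
  intro f
  -- by Schur's lemma `f` commutes with every `A`-endomorphism, so the density theorem applies
  let F : Module.End (Module.End A V) V :=
    { toFun := f
      map_add' := f.map_add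
      map_smul' := fun φ v => by
        obtain ⟨c, rfl⟩ := (IsSimpleModule.algebraMap_end_bijective_of_isAlgClosed k).2 φ
        simp }
  let b := Module.finBasis k V
  obtain ⟨a, ha⟩ := jacobson_density F (Finset.univ.image b)
  exact ⟨a, b.ext fun i => (ha (b i) (by simp)).symm⟩

theorem LieModule.adjoin_range_toEnd_eq_top (k L M : Type*) [Field k] [IsAlgClosed k]
    [LieRing L] [LieAlgebra k L] [AddCommGroup M] [Module k M] [LieRingModule L M]
    [LieModule k L M] [FiniteDimensional k M] [LieModule.IsIrreducible k L M] :
    Algebra.adjoin k (Set.range (LieModule.toEnd k L M)) = ⊤ := by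
  set B := Algebra.adjoin k (Set.range (LieModule.toEnd k L M))
  have : IsSimpleModule B M := by
    have : Nontrivial M := (LieSubmodule.nontrivial_iff k L M).1 inferInstance
    refine { eq_bot_or_eq_top := fun N => ?_ }
    let N' : LieSubmodule k L M :=
      { N.restrictScalars k with
        lie_mem := fun {x m} hm =>
          N.smul_mem (⟨toEnd k L M x, Algebra.subset_adjoin ⟨x, rfl⟩⟩ : B) hm }
    refine (IsSimpleOrder.eq_bot_or_eq_top N').imp (fun h => ?_) (fun h => ?_) <;>
      exact SetLike.ext fun m => SetLike.ext_iff.1 h m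
  refine eq_top_iff.2 fun f _ => ?_
  obtain ⟨b, rfl⟩ := IsSimpleModule.lsmul_surjective_of_isAlgClosed k (A := B) (V := M) f
  exact b.2

theorem LinearMap.lTensor_smulRight_coord_apply {k A V ι : Type*} [CommRing k] [AddCommGroup A]
    [Module k A] [AddCommGroup V] [Module k V] [DecidableEq ι] (b : Module.Basis ι k V) (i : ι)
    (v : V) (z : A ⊗[k] V) :
    ((b.coord i).smulRight v).lTensor A z = equivFinsuppOfBasisRight b z i ⊗ₜ v := by
  induction z using TensorProduct.induction_on with
  | zero => simp
  | tmul a w => simp [TensorProduct.smul_tmul]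
  | add z z' hz hz' => simp [hz, hz', TensorProduct.add_tmul]

theorem Submodule.eq_span_tmul_of_forall_lTensor_mem {k A V : Type*} [CommRing k]
    [AddCommGroup A] [Module k A] [AddCommGroup V] [Module k V] [Module.Free k V]
    (P : Submodule k (A ⊗[k] V)) (hP : ∀ f : Module.End k V, ∀ z ∈ P, f.lTensor A z ∈ P) :
    P = span k {z | ∃ a, (∀ v, a ⊗ₜ[k] v ∈ P) ∧ ∃ v, z = a ⊗ₜ[k] v} := by
  classical
  refine le_antisymm (fun z hz => ?_) (span_le.2 ?_)
  · let b := Module.Free.chooseBasis k V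
    have hcoeff : ∀ i v, equivFinsuppOfBasisRight b z i ⊗ₜ v ∈ P := fun i v => by
      rw [← LinearMap.lTensor_smulRight_coord_apply]
      exact hP _ z hz
    rw [← (equivFinsuppOfBasisRight b).symm_apply_apply z, equivFinsuppOfBasisRight_symm_apply]
    exact sum_mem fun i _ => subset_span ⟨_, hcoeff i, b i, rfl⟩
  · rintro _ ⟨a, ha, v, rfl⟩
    exact ha v

theorem Submodule.tmul_mem_of_forall_lTensor_mem {k A V : Type*} [Field k] [AddCommGroup A]
    [Module k A] [AddCommGroup V] [Module k V] {P : Submodule k (A ⊗[k] V)}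
    (hP : ∀ f : Module.End k V, ∀ z ∈ P, f.lTensor A z ∈ P) {a : A} {w : V} (hw : w ≠ 0)
    (ha : a ⊗ₜ w ∈ P) (v : V) : a ⊗ₜ v ∈ P := by
  obtain ⟨φ, hφ⟩ := Module.Projective.exists_dual_eq_one k hw
  simpa [hφ] using hP (φ.smulRight v) _ ha

theorem LieAlgebra.ExtendScalars.lie_one_tmul {R A L M : Type*} [CommRing R] [CommRing A]
    [Algebra R A] [LieRing L] [LieAlgebra R L] [AddCommGroup M] [Module R M] [LieRingModule L M]
    [LieModule R L M] (x : L) (z : A ⊗[R] M) :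
    ⁅(1 : A) ⊗ₜ[R] x, z⁆ = (LieModule.toEnd R L M x).lTensor A z := by
  induction z using TensorProduct.induction_on with
  | zero => simp
  | tmul a y => simp [bracket_tmul]
  | add z z' hz hz' => rw [lie_add, hz, hz', map_add]

namespace LieIdeal

variable {A g : Type*} [CommRing A] [Algebra ℂ A] [LieRing g] [LieAlgebra ℂ g]
  [FiniteDimensional ℂ g] [LieAlgebra.IsSimple ℂ g]

theorem lTensor_mem (I : LieIdeal ℂ (A ⊗[ℂ] g)) (f : Module.End ℂ g) {z : A ⊗[ℂ] g}
    (hz : z ∈ I) : f.lTensor A z ∈ I := by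
  have hf : f ∈ Algebra.adjoin ℂ (Set.range (LieModule.toEnd ℂ g g)) := by
    rw [LieModule.adjoin_range_toEnd_eq_top]
    trivial
  induction hf using Algebra.adjoin_induction generalizing z with
  | mem f hf =>
    obtain ⟨x, rfl⟩ := hf
    rw [← LieAlgebra.ExtendScalars.lie_one_tmul]
    exact I.lie_mem hz
  | algebraMap c =>
    simpa [Module.algebraMap_end_eq_smul_id, LinearMap.lTensor_smul] using I.smul_mem c hz
  | add f f' _ _ hf hf' =>
    rw [LinearMap.lTensor_add]
    exact I.add_mem (hf hz) (hf' hz)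
  | mul f f' _ _ hf hf' =>
    rw [LinearMap.lTensor_mul]
    exact hf (hf' hz)

def coeffIdeal (I : LieIdeal ℂ (A ⊗[ℂ] g)) : Ideal A where
  carrier := {a | ∀ v, a ⊗ₜ[ℂ] v ∈ I}
  add_mem' ha hb v := by
    rw [TensorProduct.add_tmul]
    exact I.add_mem (ha v) (hb v)
  zero_mem' v := by
    rw [TensorProduct.zero_tmul]
    exact I.zero_mem
  smul_mem' b a ha := by
    obtain ⟨x, y, hxy⟩ : ∃ x y : g, ⁅x, y⁆ ≠ 0 := by
      by_contra! h
      exact LieAlgebra.IsSimple.non_abelian ℂ (L := g) ⟨h⟩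
    -- `(b * a) ⊗ ⁅x, y⁆ = ⁅b ⊗ x, a ⊗ y⁆ ∈ I`, and `⁅x, y⁆ ≠ 0` can then be replaced by any `v`
    exact Submodule.tmul_mem_of_forall_lTensor_mem (P := I.toSubmodule)
      (fun f _ => I.lTensor_mem f) hxy (I.lie_mem (x := b ⊗ₜ x) (ha y))

end LieIdeal

theorem stmt0 (g : Type*) [LieRing g] [LieAlgebra ℂ g]
    [FiniteDimensional ℂ g] [LieAlgebra.IsSimple ℂ g]
    (A : Type*) [CommRing A] [Algebra ℂ A]
    (I : LieIdeal ℂ (A ⊗[ℂ] g)) :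
    ∃ S : Ideal A,
      (I : Submodule ℂ (A ⊗[ℂ] g)) =
        Submodule.span ℂ {z : A ⊗[ℂ] g | ∃ a ∈ S, ∃ y : g, z = a ⊗ₜ[ℂ] y} :=
  ⟨I.coeffIdeal, Submodule.eq_span_tmul_of_forall_lTensor_mem _ fun f _ => I.lTensor_mem f⟩
end

section
/- Let A be a commutative ℂ-algebra with a countable linearly independent family (a_r)_{r ≥ 1} in A, and fix N ∈ ℕ. For b ∈ A let sym_N(b) = Σ_{k=0}^{N-1} 1^{⊗k} ⊗ b ⊗ 1^{⊗(N-k-1)} ∈ A^{⊗N}. Then the products sym_N(a_{r₁})·sym_N(a_{r₂})⋯sym_N(a_{r_m}) over all weakly increasing tuples 1 ≤ r₁ ≤ ⋯ ≤ r_m with m ≤ N are linearly independent in A^{⊗N}. -/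
open scoped TensorProduct PiTensorProduct

noncomputable def symTensor {A : Type*} [CommRing A] [Algebra ℂ A] (N : ℕ) (b : A) :
    ⨂[ℂ] _ : Fin N, A :=
  ∑ k : Fin N, PiTensorProduct.tprod ℂ (Function.update (fun _ : Fin N => (1 : A)) k b)

/-!
Let `lam n` be coordinate functionals dual to the family `a`, so `lam 0` reads off the coefficient
of `1`. Expanding `∏ₛ sym_N (a rₛ)` gives a sum, over maps `f` from factors to tensor slots, of
pure tensors whose slot `k` is the product of the factors placed in `k`. Pair it with
`⨂ₖ lam (gₖ)`, where `g = (q₁, …, q_{m₀}, 0, …, 0)` for a tuple `q` of length `m₀`. A term survives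
only if every one of the `m₀` labelled slots receives a factor; when the tuple has length
`m ≤ m₀` this forces `f` to be a bijection onto those slots respecting the labels, and each such
term contributes exactly `1`. So the pairing counts these placements: it is positive for the
tuple `q` itself and vanishes on every other monotone tuple of length `≤ m₀`, since a monotone
tuple is determined up to permutation of its entries. This triangularity with respect to the
length gives linear independence.
-/

open Finset Function Module

theorem LinearIndependent.of_dual_triangular {R M ι β : Type*} [CommRing R] [NoZeroDivisors R]
    [AddCommGroup M] [Module R M] [LinearOrder β] {v : ι → M} (d : ι → β)
    (φ : ι → Dual R M) (hdiag : ∀ i, φ i (v i) ≠ 0)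
    (htri : ∀ i j, j ≠ i → d j ≤ d i → φ i (v j) = 0) : LinearIndependent R v := by
  classical
  rw [linearIndependent_iff']
  intro s c hs
  by_contra! hc
  -- pair the relation with the functional of a supporting index of maximal degree
  obtain ⟨i, hi, hmax⟩ := (s.filter (c · ≠ 0)).exists_max_image d (by simpa [Finset.Nonempty])
  rw [mem_filter] at hi
  have hsum : ∑ j ∈ s, c j * φ i (v j) = c i * φ i (v i) := by
    refine sum_eq_single_of_mem i hi.1 fun j hj hji => ?_
    by_cases hcj : c j = 0
    · rw [hcj, zero_mul]
    · rw [htri i j hji (hmax j (mem_filter.2 ⟨hj, hcj⟩)), mul_zero]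
  have := congrArg (φ i) hs
  simp only [map_sum, map_smul, smul_eq_mul, map_zero, hsum] at this
  exact mul_ne_zero hi.2 (hdiag i) this

theorem LinearIndependent.exists_dual_eq_ite {K V ι : Type*} [Field K] [AddCommGroup V]
    [Module K V] [DecidableEq ι] {v : ι → V} (hs : LinearIndependent K v) :
    ∃ lam : ι → Dual K V, ∀ i j, lam i (v j) = if j = i then 1 else 0 := by
  classical
  let B := Basis.extend hs.linearIndepOn_id
  have hv : ∀ i, v i ∈ hs.linearIndepOn_id.extend (Set.subset_univ _) := fun i =>
    hs.linearIndepOn_id.subset_extend _ ⟨i, rfl⟩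
  refine ⟨fun i => B.coord ⟨v i, hv i⟩, fun i j => ?_⟩
  have hB : B ⟨v j, hv j⟩ = v j := Basis.extend_apply_self _ _
  rw [Basis.coord_apply, ← hB, B.repr_self, Finsupp.single_apply]
  simp [hs.injective.eq_iff]

theorem prod_symTensor {A ι : Type*} [CommRing A] [Algebra ℂ A] [Fintype ι] [DecidableEq ι]
    (N : ℕ) (b : ι → A) :
    ∏ s, symTensor N (b s) = ∑ f : ι → Fin N, ⨂ₜ[ℂ] k, ∏ s with f s = k, b s := by
  simp only [symTensor, prod_univ_sum, Fintype.piFinset_univ, ← PiTensorProduct.tprod_prod]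
  refine sum_congr rfl fun f _ => congrArg _ (funext fun k => ?_)
  simp [update_apply, prod_filter, eq_comm]

theorem Function.Injective.filter_apply_eq {ι κ : Type*} [Fintype ι] [DecidableEq κ]
    {f : ι → κ} (hf : Injective f) (s : ι) : ({t | f t = f s} : Finset ι) = {s} := by
  ext
  simp [hf.eq_iff]

section Placement

variable {R A ι κ : Type*} [CommSemiring R] [CommSemiring A] [Module R A] [Fintype ι] [Fintype κ]
  [DecidableEq κ] (lam : ℕ → Dual R A) (a : ℕ → A) (r : ι → ℕ) (g : κ → ℕ) (f : ι → κ)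

def IsPlacement : Prop :=
  Injective f ∧ (∀ s, g (f s) = r s) ∧ ∀ k, g k ≠ 0 → ∃ s, f s = k

def placementCoeff : R :=
  ∏ k, lam (g k) (∏ s with f s = k, a (r s))

variable {lam a r g f}

theorem placementCoeff_eq_one (hlam : ∀ n n', lam n (a n') = if n' = n then 1 else 0)
    (ha0 : a 0 = 1) (hf : IsPlacement r g f) : placementCoeff lam a r g f = 1 := by
  obtain ⟨hinj, hgf, hsurj⟩ := hf
  refine prod_eq_one fun k _ => ?_
  by_cases hk : ∃ s, f s = k
  · obtain ⟨s, rfl⟩ := hk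
    simp [hinj.filter_apply_eq, hgf, hlam]
  · have hg : g k = 0 := by
      by_contra h
      exact hk (hsurj k h)
    simp [not_exists.1 hk, hg, ← ha0, hlam]

theorem isPlacement_of_placementCoeff_ne_zero
    (hlam : ∀ n n', lam n (a n') = if n' = n then 1 else 0) (ha0 : a 0 = 1)
    (hcard : Fintype.card ι ≤ #{k | g k ≠ 0}) (hf : placementCoeff lam a r g f ≠ 0) :
    IsPlacement r g f := by
  classical
  have hfac : ∀ k, lam (g k) (∏ s with f s = k, a (r s)) ≠ 0 := fun k h =>
    hf (prod_eq_zero (mem_univ k) h)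
  have hsurj : ∀ k, g k ≠ 0 → ∃ s, f s = k := by
    intro k hk
    by_contra! hnot
    apply hfac k
    simp [hnot, ← ha0, hlam, Ne.symm hk]
  -- every labelled slot receives a factor, and there are no more factors than labelled slots
  have hinj : Injective f := by
    have hsub : ({k | g k ≠ 0} : Finset κ) ⊆ univ.image f := fun k hk => by
      simpa using hsurj k (mem_filter.1 hk).2
    rw [← Set.injOn_univ, ← coe_univ]
    exact injOn_of_card_image_eq <|
      card_image_le.antisymm ((hcard.trans (card_le_card hsub)))
  refine ⟨hinj, fun s => ?_, hsurj⟩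
  have := hfac (f s)
  rw [hinj.filter_apply_eq, prod_singleton, hlam] at this
  by_contra h
  exact this (if_neg (Ne.symm h))

theorem placementCoeff_eq_ite (hlam : ∀ n n', lam n (a n') = if n' = n then 1 else 0)
    (ha0 : a 0 = 1) (hcard : Fintype.card ι ≤ #{k | g k ≠ 0}) [Decidable (IsPlacement r g f)] :
    placementCoeff lam a r g f = if IsPlacement r g f then 1 else 0 := by
  split_ifs with hf
  · exact placementCoeff_eq_one hlam ha0 hf
  · by_contra h
    exact hf (isPlacement_of_placementCoeff_ne_zero hlam ha0 hcard h)

end Placement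

abbrev MonotoneTuple (N : ℕ) : Type :=
  Σ m : Fin (N + 1), {r : Fin (m : ℕ) → ℕ // Monotone r ∧ ∀ s, 1 ≤ r s}

namespace MonotoneTuple

variable {N : ℕ}

theorem ext_of_equiv {p q : MonotoneTuple N} (e : Fin p.1 ≃ Fin q.1)
    (h : ∀ s, p.2.1 s = q.2.1 (e s)) : p = q := by
  revert e h
  obtain ⟨m, r, hr, -⟩ := p
  obtain ⟨m', r', hr', -⟩ := q
  intro e h
  obtain rfl : m = m' := Fin.ext (by simpa using Fintype.card_congr e)
  have hre : r = r' ∘ e := funext h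
  have hperm := Tuple.unique_monotone (σ := e) (τ := Equiv.refl _) (hre ▸ hr) hr'
  obtain rfl : r = r' := hre.trans hperm
  rfl

/-- The labels `(r₁, …, rₘ, 0, …, 0)` of the slots of `a r₁ ⊗ ⋯ ⊗ a rₘ ⊗ 1 ⊗ ⋯ ⊗ 1`. -/
noncomputable def slotLabels (q : MonotoneTuple N) : Fin N → ℕ :=
  extend (Fin.castLE q.1.is_le) q.2.1 0

theorem slotLabels_castLE (q : MonotoneTuple N) (j : Fin q.1) :
    q.slotLabels (Fin.castLE q.1.is_le j) = q.2.1 j :=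
  (Fin.castLE_injective _).extend_apply _ _ _

theorem mem_range_castLE_of_slotLabels_ne_zero {q : MonotoneTuple N} {k : Fin N}
    (hk : q.slotLabels k ≠ 0) : k ∈ Set.range (Fin.castLE q.1.is_le) := by
  by_contra h
  exact hk (extend_apply' _ _ _ h)

theorem le_card_slotLabels_ne_zero (q : MonotoneTuple N) :
    (q.1 : ℕ) ≤ #{k | q.slotLabels k ≠ 0} := by
  simpa using card_le_card_of_injOn (s := univ) (Fin.castLE q.1.is_le)
    (fun j _ => by simp [slotLabels_castLE, Nat.one_le_iff_ne_zero.1 (q.2.2.2 j)])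
    (Fin.castLE_injective _).injOn

theorem isPlacement_castLE (q : MonotoneTuple N) :
    IsPlacement q.2.1 q.slotLabels (Fin.castLE q.1.is_le) :=
  ⟨Fin.castLE_injective _, q.slotLabels_castLE, fun _ hk =>
    mem_range_castLE_of_slotLabels_ne_zero hk⟩

theorem eq_of_isPlacement {p q : MonotoneTuple N} {f : Fin p.1 → Fin N}
    (hf : IsPlacement p.2.1 q.slotLabels f) : p = q := by
  obtain ⟨hinj, hlabel, hsurj⟩ := hf
  have hc := Fin.castLE_injective q.1.is_le
  have hrange : Set.range f = Set.range (Fin.castLE q.1.is_le) := by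
    refine subset_antisymm ?_ ?_
    · rintro _ ⟨s, rfl⟩
      exact mem_range_castLE_of_slotLabels_ne_zero
        (by simp [hlabel, Nat.one_le_iff_ne_zero.1 (p.2.2.2 s)])
    · rintro _ ⟨j, rfl⟩
      exact hsurj _ (by simp [slotLabels_castLE, Nat.one_le_iff_ne_zero.1 (q.2.2.2 j)])
  let e := (Equiv.ofInjective f hinj).trans
    ((Equiv.setCongr hrange).trans (Equiv.ofInjective _ hc).symm)
  refine ext_of_equiv e fun s => ?_
  have hes : Fin.castLE q.1.is_le (e s) = f s := Equiv.apply_ofInjective_symm hc _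
  rw [← slotLabels_castLE q (e s), hes, hlabel]

theorem dualDistrib_prod_symTensor {A : Type*} [CommRing A] [Algebra ℂ A]
    {lam : ℕ → Dual ℂ A} {a : ℕ → A} (hlam : ∀ n n', lam n (a n') = if n' = n then 1 else 0)
    (ha0 : a 0 = 1) {p q : MonotoneTuple N} (hpq : p.1 ≤ q.1) :
    PiTensorProduct.dualDistrib (⨂ₜ[ℂ] k, lam (q.slotLabels k))
        (∏ s, symTensor N (a (p.2.1 s))) =
      Nat.card {f // IsPlacement p.2.1 q.slotLabels f} := by
  classical
  have hcard : Fintype.card (Fin p.1) ≤ #{k | q.slotLabels k ≠ 0} :=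
    (Fintype.card_fin _).trans_le ((Fin.le_def.1 hpq).trans q.le_card_slotLabels_ne_zero)
  rw [Nat.card_eq_fintype_card, Fintype.card_subtype, prod_symTensor, map_sum, ← sum_boole]
  refine sum_congr rfl fun f _ => ?_
  rw [PiTensorProduct.dualDistrib_apply, ← placementCoeff_eq_ite hlam ha0 hcard]
  rfl

end MonotoneTuple

/-- Let `A` be a commutative `ℂ`-algebra and `(a_r)_{r ≥ 1}` a family in `A` such that
`{1} ∪ {a_r : r ≥ 1}` is linearly independent (encoded by `a 0 = 1` and linear independence
of the whole family `a`).  Then the products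
`sym_N(a_{r₁}) ⋯ sym_N(a_{r_m})` over all weakly increasing tuples `1 ≤ r₁ ≤ ⋯ ≤ r_m`
with `m ≤ N` are linearly independent in `A^{⊗N}`. -/
theorem stmt5 (A : Type*) [CommRing A] [Algebra ℂ A] (N : ℕ)
    (a : ℕ → A) (ha0 : a 0 = 1) (hindep : LinearIndependent ℂ a) :
    LinearIndependent ℂ
      (fun p : Σ m : Fin (N + 1), {r : Fin (m : ℕ) → ℕ // Monotone r ∧ ∀ s, 1 ≤ r s} =>
        ∏ s : Fin (p.1 : ℕ), symTensor N (a (p.2.1 s))) := by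
  classical
  obtain ⟨lam, hlam⟩ := hindep.exists_dual_eq_ite
  refine LinearIndependent.of_dual_triangular (fun p : MonotoneTuple N => p.1)
    (fun q : MonotoneTuple N => PiTensorProduct.dualDistrib (⨂ₜ[ℂ] k, lam (q.slotLabels k)))
    (fun q => ?_) (fun q p hne hle => ?_)
  · rw [MonotoneTuple.dualDistrib_prod_symTensor hlam ha0 le_rfl, Nat.cast_ne_zero,
      Nat.card_ne_zero]
    exact ⟨⟨⟨_, MonotoneTuple.isPlacement_castLE q⟩⟩, inferInstance⟩
  · rw [MonotoneTuple.dualDistrib_prod_symTensor hlam ha0 hle, Nat.cast_eq_zero,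
      Nat.card_eq_zero]
    exact .inl ⟨fun f => hne (MonotoneTuple.eq_of_isPlacement f.2)⟩
end

section
/- Let V be a finite-dimensional irreducible module (in the category of locally finite g-modules) for g⊗A, where g is a finite-dimensional complex simple Lie algebra and A a commutative unital ℂ-algebra. Then there exists a weight λ of V with dim V_λ = 1 and wt(V) ⊆ λ − Q⁺. -/
/-!
Since `g` is simple, its Cartan subalgebra `h` is abelian, so the weight spaces `V_χ` are
independent and only finitely many are nonzero. As the simple roots are linearly independent,
`μ ≤ λ ↔ λ - μ ∈ Q⁺` is a partial order, and we pick a maximal weight `λ`. Then `A ⊗ n⁺` kills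
`V_λ`, so for every nonzero `v ∈ V_λ` the space `U(A ⊗ (n⁻ ⊕ h)) v` is a submodule, hence all
of `V`. Since `A ⊗ n⁻` strictly lowers weights, `V = U(A ⊗ h) v ⊕ ⨁_{μ < λ} V_μ`: all weights
lie in `λ - Q⁺`, and `V_λ = U(A ⊗ h) v` for every nonzero `v ∈ V_λ`. The operators of the
abelian Lie algebra `A ⊗ h` thus act on `V_λ` with no invariant subspace but `0` and `V_λ`,
which by Schur's lemma makes `V_λ` a line.
-/

open TensorProduct

/-- The `χ`-weight space of a `g`-module `V` with respect to a Cartan subalgebra `H`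
(used below with `V = g`, the adjoint module, to describe root spaces). -/
def wtSpace {g : Type*} [LieRing g] [LieAlgebra ℂ g] (H : LieSubalgebra ℂ g)
    (V : Type*) [AddCommGroup V] [Module ℂ V] [LieRingModule g V] [LieModule ℂ g V]
    (χ : Module.Dual ℂ H) : Submodule ℂ V where
  carrier := {v | ∀ h : H, ⁅(h : g), v⁆ = χ h • v}
  add_mem' := by
    intro x y hx hy h
    rw [lie_add, hx h, hy h, smul_add]
  zero_mem' := by intro h; simp
  smul_mem' := by
    intro c x hx h
    rw [lie_smul, hx h, smul_comm]

/-- The `χ`-weight space of a `g⊗A`-module `V`, with `h ∈ H ⊆ g` acting through `1 ⊗ h`. -/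
def cwtSpace {g : Type*} [LieRing g] [LieAlgebra ℂ g] (A : Type*) [CommRing A] [Algebra ℂ A]
    (H : LieSubalgebra ℂ g) (V : Type*) [AddCommGroup V] [Module ℂ V]
    [LieRingModule (A ⊗[ℂ] g) V] [LieModule ℂ (A ⊗[ℂ] g) V]
    (χ : Module.Dual ℂ H) : Submodule ℂ V where
  carrier := {v | ∀ h : H, ⁅((1 : A) ⊗ₜ[ℂ] (h : g) : A ⊗[ℂ] g), v⁆ = χ h • v}
  add_mem' := by
    intro x y hx hy h
    rw [lie_add, hx h, hy h, smul_add]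
  zero_mem' := by intro h; simp
  smul_mem' := by
    intro c x hx h
    rw [lie_smul, hx h, smul_comm]

theorem eq_zero_of_mem_closure_range_of_neg_mem {ι M : Type*} [AddCommGroup M] {α : ι → M}
    (hα : LinearIndependent ℕ α) {q : M} (hq : q ∈ AddSubmonoid.closure (Set.range α))
    (hq' : -q ∈ AddSubmonoid.closure (Set.range α)) : q = 0 := by
  obtain ⟨a, rfl⟩ := AddSubmonoid.mem_closure_range_iff.mp hq
  obtain ⟨b, hb⟩ := AddSubmonoid.mem_closure_range_iff.mp hq'
  have hab : Finsupp.linearCombination ℕ α (a + b) = Finsupp.linearCombination ℕ α 0 := by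
    simp only [map_add, Finsupp.linearCombination_apply, ← hb, add_neg_cancel, map_zero]
  have ha : a = 0 := by
    ext i
    exact Nat.eq_zero_of_add_eq_zero_right
      (congrArg (· i) (hα.finsuppLinearCombination_injective hab))
  simp [ha]

theorem Set.Finite.exists_maximal_wrt_addSubmonoid {M : Type*} [AddCommGroup M]
    {Q : AddSubmonoid M} (hQ : ∀ q ∈ Q, -q ∈ Q → q = 0) {s : Set M} (hs : s.Finite)
    (hne : s.Nonempty) : ∃ lam ∈ s, ∀ μ ∈ s, μ - lam ∈ Q → μ = lam := by
  let _ : LE M := ⟨fun μ ν ↦ ν - μ ∈ Q⟩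
  have : IsTrans M (· ≤ ·) := ⟨fun a b c (hab : b - a ∈ Q) (hbc : c - b ∈ Q) ↦
    show c - a ∈ Q by simpa using Q.add_mem hbc hab⟩
  obtain ⟨lam, hlam, hmax⟩ := hs.exists_maximal hne
  refine ⟨lam, hlam, fun μ hμ h ↦ sub_eq_zero.mp (hQ _ h ?_)⟩
  rw [neg_sub]
  exact hmax hμ h

theorem TensorProduct.span_image2_tmul_univ_eq_top {R M N : Type*} [CommSemiring R]
    [AddCommMonoid M] [AddCommMonoid N] [Module R M] [Module R N] {s : Set N}
    (hs : Submodule.span R s = ⊤) :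
    Submodule.span R (Set.image2 (· ⊗ₜ[R] ·) (Set.univ : Set M) s) = ⊤ := by
  have h := Submodule.map₂_span_span R (TensorProduct.mk R M N) Set.univ s
  rw [Submodule.span_univ, hs, TensorProduct.map₂_mk_top_top_eq_top] at h
  exact h.symm

theorem LinearMap.apply_mem_of_mem_biSup {R M N ι : Type*} [Semiring R] [AddCommMonoid M]
    [AddCommMonoid N] [Module R M] [Module R N] (f : M →ₗ[R] N) {p : ι → Submodule R M}
    {s : Set ι} {q : Submodule R N} (h : ∀ i ∈ s, ∀ x ∈ p i, f x ∈ q) {x : M}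
    (hx : x ∈ ⨆ i ∈ s, p i) : f x ∈ q :=
  (iSup₂_le fun i hi y hy ↦ h i hi y hy : ⨆ i ∈ s, p i ≤ q.comap f) hx

section StableSpan

variable {R L M : Type*} [CommRing R] [LieRing L] [AddCommGroup M] [Module R M]
  [LieRingModule L M]

variable (R) in
/-- The subspace `U(S) v`, where `U(S)` is the unital associative algebra generated by `S`. -/
def stableSpan (S : Set L) (v : M) : Submodule R M :=
  sInf {W | v ∈ W ∧ ∀ s ∈ S, ∀ w ∈ W, ⁅s, w⁆ ∈ W}

theorem mem_stableSpan_self (S : Set L) (v : M) : v ∈ stableSpan R S v :=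
  Submodule.mem_sInf.mpr fun _ hW ↦ hW.1

theorem lie_mem_stableSpan {S : Set L} {v : M} {s : L} (hs : s ∈ S) {w : M}
    (hw : w ∈ stableSpan R S v) : ⁅s, w⁆ ∈ stableSpan R S v :=
  Submodule.mem_sInf.mpr fun W hW ↦ hW.2 s hs w (Submodule.mem_sInf.mp hw W hW)

theorem stableSpan_le {S : Set L} {v : M} {W : Submodule R M} (hv : v ∈ W)
    (hW : ∀ s ∈ S, ∀ w ∈ W, ⁅s, w⁆ ∈ W) : stableSpan R S v ≤ W :=
  sInf_le ⟨hv, hW⟩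

theorem stableSpan_le_span_singleton [LieAlgebra R L] [LieModule R L M] {S : Set L} {v : M}
    (hS : ∀ s ∈ S, ⁅s, v⁆ ∈ R ∙ v) : stableSpan R S v ≤ R ∙ v := by
  refine stableSpan_le (Submodule.mem_span_singleton_self v) fun s hs w hw ↦ ?_
  obtain ⟨c, rfl⟩ := Submodule.mem_span_singleton.mp hw
  rw [lie_smul]
  exact Submodule.smul_mem _ c (hS s hs)

-- A PBW-type argument: moving `p ∈ P` past `s ∈ S` only costs `⁅p, s⁆ ∈ span (S ∪ P)`.
theorem lie_mem_stableSpan_of_span_union_eq_top [LieAlgebra R L] [LieModule R L M]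
    {S P : Set L} {v : M} (hSP : Submodule.span R (S ∪ P) = ⊤) (hP : ∀ p ∈ P, ⁅p, v⁆ = 0)
    (x : L) {w : M} (hw : w ∈ stableSpan R S v) : ⁅x, w⁆ ∈ stableSpan R S v := by
  set W := stableSpan R S v
  let W' : Submodule R M := W ⊓ ⨅ p ∈ P, W.comap (LieModule.toEnd R L M p)
  have mem_W' {w : M} : w ∈ W' ↔ w ∈ W ∧ ∀ p ∈ P, ⁅p, w⁆ ∈ W := by
    simp [W', Submodule.mem_iInf]
  have lie_mem_of_mem_W' (x : L) {w : M} (hw : w ∈ W') : ⁅x, w⁆ ∈ W := by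
    have hx : x ∈ Submodule.span R (S ∪ P) := hSP ▸ Submodule.mem_top
    induction hx using Submodule.span_induction with
    | mem z hz => exact hz.elim (lie_mem_stableSpan · (mem_W'.mp hw).1) ((mem_W'.mp hw).2 z)
    | zero => simp
    | add y z _ _ hy hz => rw [add_lie]; exact W.add_mem hy hz
    | smul c z _ hz => rw [smul_lie]; exact W.smul_mem c hz
  have hWW' : W ≤ W' := by
    refine stableSpan_le (mem_W'.mpr ⟨mem_stableSpan_self S v, fun p hp ↦ ?_⟩) fun s hs w hw ↦ ?_
    · simp [hP p hp]
    · refine mem_W'.mpr ⟨lie_mem_stableSpan hs (mem_W'.mp hw).1, fun p hp ↦ ?_⟩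
      rw [leibniz_lie]
      exact W.add_mem (lie_mem_of_mem_W' _ hw)
        (lie_mem_stableSpan hs ((mem_W'.mp hw).2 p hp))
  exact lie_mem_of_mem_W' x (hWW' hw)

theorem stableSpan_eq_top [LieAlgebra R L] [LieModule R L M] [LieModule.IsIrreducible R L M]
    {S P : Set L} {v : M} (hSP : Submodule.span R (S ∪ P) = ⊤) (hP : ∀ p ∈ P, ⁅p, v⁆ = 0)
    (hv : v ≠ 0) : stableSpan R S v = ⊤ := by
  let N : LieSubmodule R L M :=
    { stableSpan R S v with lie_mem := lie_mem_stableSpan_of_span_union_eq_top hSP hP _ }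
  have hvN : v ∈ N := mem_stableSpan_self S v
  have hN : N ≠ ⊥ := fun h ↦ hv <| (LieSubmodule.mem_bot v).mp (h ▸ hvN)
  have hN_top := congrArg LieSubmodule.toSubmodule
    ((IsSimpleOrder.eq_bot_or_eq_top N).resolve_left hN)
  rwa [LieSubmodule.top_toSubmodule] at hN_top

theorem lie_eq_smul_of_mem_stableSpan [LieAlgebra R L] [LieModule R L M] {S : Set L} {t : L}
    (hS : ∀ s ∈ S, ⁅t, s⁆ = 0) {v : M} {c : R} (hv : ⁅t, v⁆ = c • v) {w : M}
    (hw : w ∈ stableSpan R S v) : ⁅t, w⁆ = c • w := by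
  have : stableSpan R S v ≤ (LieModule.toEnd R L M t).eigenspace c := by
    refine stableSpan_le (Module.End.mem_eigenspace_iff.mpr hv) fun s hs w hw ↦ ?_
    rw [Module.End.mem_eigenspace_iff, LieModule.toEnd_apply_apply] at hw ⊢
    rw [leibniz_lie, hS s hs, zero_lie, zero_add, hw, lie_smul]
  exact Module.End.mem_eigenspace_iff.mp (this hw)

/-- Schur's lemma for a commuting family. -/
theorem finrank_eq_one_of_forall_stableSpan_eq {K : Type*} [Field K] [IsAlgClosed K]
    [Module K M] [LieAlgebra K L] [LieModule K L M] {S : Set L}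
    (hS : ∀ s ∈ S, ∀ t ∈ S, ⁅s, t⁆ = 0)
    {U : Submodule K M} [FiniteDimensional K U] (hU : U ≠ ⊥)
    (hgen : ∀ v ∈ U, v ≠ 0 → stableSpan K S v = U) : Module.finrank K U = 1 := by
  obtain ⟨v₀, hv₀, hv₀0⟩ := Submodule.exists_mem_ne_zero_of_ne_bot hU
  have hmaps {s : L} (hs : s ∈ S) : Set.MapsTo (LieModule.toEnd K L M s) U U := fun w hw ↦ by
    rw [SetLike.mem_coe, ← hgen v₀ hv₀ hv₀0] at hw ⊢
    exact lie_mem_stableSpan hs hw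
  have hscalar {s : L} (hs : s ∈ S) : ∃ c : K, ∀ u ∈ U, ⁅s, u⁆ = c • u := by
    have : Nontrivial U := Submodule.nontrivial_iff_ne_bot.mpr hU
    obtain ⟨c, hc⟩ :=
      Module.End.exists_eigenvalue ((LieModule.toEnd K L M s).restrict (hmaps hs))
    obtain ⟨v₁, hv₁⟩ := hc.exists_hasEigenvector
    have hv₁s : ⁅s, (v₁ : M)⁆ = c • (v₁ : M) := congrArg Subtype.val hv₁.apply_eq_smul
    refine ⟨c, fun u hu ↦ ?_⟩
    rw [← hgen v₁ v₁.2 (by simpa using hv₁.2)] at hu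
    exact lie_eq_smul_of_mem_stableSpan (hS s hs) hv₁s hu
  have hU_le : U ≤ K ∙ v₀ := by
    refine hgen v₀ hv₀ hv₀0 ▸ stableSpan_le_span_singleton fun s hs ↦ ?_
    obtain ⟨c, hc⟩ := hscalar hs
    rw [hc v₀ hv₀]
    exact Submodule.smul_mem _ c (Submodule.mem_span_singleton_self v₀)
  rw [le_antisymm hU_le ((Submodule.span_singleton_le_iff_mem _ _).mpr hv₀)]
  exact finrank_span_singleton hv₀0

end StableSpan

section CurrentAlgebra

variable {g : Type*} [LieRing g] [LieAlgebra ℂ g] {H : LieSubalgebra ℂ g}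
  {A : Type*} [CommRing A] [Algebra ℂ A]
  {V : Type*} [AddCommGroup V] [Module ℂ V] [LieRingModule (A ⊗[ℂ] g) V]
  [LieModule ℂ (A ⊗[ℂ] g) V]

variable (A) in
def tmulSet (s : Set g) : Set (A ⊗[ℂ] g) :=
  Set.image2 (· ⊗ₜ[ℂ] ·) Set.univ s

theorem tmul_mem_tmulSet (a : A) {s : Set g} {x : g} (hx : x ∈ s) : a ⊗ₜ[ℂ] x ∈ tmulSet A s :=
  Set.mem_image2_of_mem (Set.mem_univ a) hx

theorem lie_tmul_mem_cwtSpace_add {β χ : Module.Dual ℂ H} {x : g} (hx : x ∈ wtSpace H g β)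
    (a : A) {v : V} (hv : v ∈ cwtSpace A H V χ) :
    ⁅a ⊗ₜ[ℂ] x, v⁆ ∈ cwtSpace A H V (χ + β) := by
  intro h
  have hhx : ⁅(1 : A) ⊗ₜ[ℂ] (h : g), a ⊗ₜ[ℂ] x⁆ = β h • a ⊗ₜ[ℂ] x := by
    rw [LieAlgebra.ExtendScalars.bracket_tmul, one_mul, hx h, tmul_smul]
  rw [leibniz_lie, hhx, smul_lie, hv h, lie_smul, LinearMap.add_apply, add_smul, add_comm]

theorem lie_tmul_mem_biSup_cwtSpace {ι : Type*} {B : Set ι} {f : ι → Module.Dual ℂ H} {x : g}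
    (hx : x ∈ ⨆ i ∈ B, wtSpace H g (f i)) (a : A) {χ : Module.Dual ℂ H} {v : V}
    (hv : v ∈ cwtSpace A H V χ) : ⁅a ⊗ₜ[ℂ] x, v⁆ ∈ ⨆ i ∈ B, cwtSpace A H V (χ + f i) :=
  let act : g →ₗ[ℂ] V := (LieModule.toEnd ℂ (A ⊗[ℂ] g) V : A ⊗[ℂ] g →ₗ[ℂ] Module.End ℂ V).flip v
    ∘ₗ TensorProduct.mk ℂ A g a
  act.apply_mem_of_mem_biSup (fun i hi _ hy ↦ Submodule.mem_iSup_of_mem i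
    (Submodule.mem_iSup_of_mem hi (lie_tmul_mem_cwtSpace_add hy a hv))) hx

theorem LieSubalgebra.lie_eq_zero_of_mem [IsLieAbelian H] {x y : g} (hx : x ∈ H) (hy : y ∈ H) :
    ⁅x, y⁆ = 0 :=
  congrArg Subtype.val (trivial_lie_zero H H ⟨x, hx⟩ ⟨y, hy⟩)

theorem mem_wtSpace_zero [IsLieAbelian H] {x : g} (hx : x ∈ H) : x ∈ wtSpace H g 0 := fun h ↦ by
  simp [H.lie_eq_zero_of_mem h.2 hx]

theorem lie_tmul_mem_cwtSpace [IsLieAbelian H] (a : A) {x : g} (hx : x ∈ H)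
    {χ : Module.Dual ℂ H} {v : V} (hv : v ∈ cwtSpace A H V χ) :
    ⁅a ⊗ₜ[ℂ] x, v⁆ ∈ cwtSpace A H V χ := by
  simpa using lie_tmul_mem_cwtSpace_add (mem_wtSpace_zero hx) a hv

theorem lie_tmul_mem_biSup_cwtSpace_of_mem [IsLieAbelian H] (a : A) {x : g} (hx : x ∈ H)
    {T : Set (Module.Dual ℂ H)} {w : V} (hw : w ∈ ⨆ μ ∈ T, cwtSpace A H V μ) :
    ⁅a ⊗ₜ[ℂ] x, w⁆ ∈ ⨆ μ ∈ T, cwtSpace A H V μ :=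
  (LieModule.toEnd ℂ (A ⊗[ℂ] g) V (a ⊗ₜ x)).apply_mem_of_mem_biSup (fun μ hμ _ hv ↦
    Submodule.mem_iSup_of_mem μ (Submodule.mem_iSup_of_mem hμ (lie_tmul_mem_cwtSpace a hx hv))) hw

theorem stableSpan_le_cwtSpace [IsLieAbelian H] {χ : Module.Dual ℂ H} {v : V}
    (hv : v ∈ cwtSpace A H V χ) :
    stableSpan ℂ (tmulSet A (H : Set g)) v ≤ cwtSpace A H V χ :=
  stableSpan_le hv fun _ ⟨a, _, _, hx, hs⟩ _ hw ↦ hs ▸ lie_tmul_mem_cwtSpace a hx hw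

theorem lie_eq_zero_of_mem_tmulSet [IsLieAbelian H] :
    ∀ s ∈ tmulSet A (H : Set g),
      ∀ t ∈ tmulSet A (H : Set g), ⁅s, t⁆ = 0 := by
  rintro _ ⟨a, -, x, hx, rfl⟩ _ ⟨b, -, y, hy, rfl⟩
  rw [LieAlgebra.ExtendScalars.bracket_tmul, H.lie_eq_zero_of_mem hx hy, tmul_zero]

theorem iSupIndep_cwtSpace [IsLieAbelian H] : iSupIndep (cwtSpace A H V) := by
  let T (h : H) : Module.End ℂ V := LieModule.toEnd ℂ (A ⊗[ℂ] g) V ((1 : A) ⊗ₜ[ℂ] (h : g))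
  have hT (h h' : H) : Commute (T h) (T h') := LinearMap.ext fun v ↦ by
    simp only [T, Module.End.mul_apply, LieModule.toEnd_apply_apply]
    rw [leibniz_lie, LieAlgebra.ExtendScalars.bracket_tmul, H.lie_eq_zero_of_mem h.2 h'.2,
      tmul_zero, zero_lie, zero_add]
  have hindep := Module.End.independent_iInf_maxGenEigenspace_of_forall_mapsTo T
    fun h h' φ ↦ Module.End.mapsTo_maxGenEigenspace_of_comm (hT h' h) φ
  refine (hindep.comp DFunLike.coe_injective).mono fun χ ↦ le_iInf fun h v hv ↦ ?_
  exact Module.End.eigenspace_le_maxGenEigenspace (Module.End.mem_eigenspace_iff.mpr (hv h))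

theorem finite_setOf_cwtSpace_ne_bot [IsLieAbelian H] [FiniteDimensional ℂ V] :
    {χ | cwtSpace A H V χ ≠ ⊥}.Finite :=
  Submodule.finite_ne_bot_of_iSupIndep iSupIndep_cwtSpace

end CurrentAlgebra

section HighestWeight

variable {g : Type*} [LieRing g] [LieAlgebra ℂ g] {H : LieSubalgebra ℂ g}
  {A : Type*} [CommRing A] [Algebra ℂ A]
  {V : Type*} [AddCommGroup V] [Module ℂ V] [LieRingModule (A ⊗[ℂ] g) V]
  [LieModule ℂ (A ⊗[ℂ] g) V]

theorem lie_tmul_eq_zero_of_forall_cwtSpace_add_eq_bot {Rplus : Set (Module.Dual ℂ H)}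
    {npos : Submodule ℂ g} (hnpos : npos ≤ ⨆ β ∈ Rplus, wtSpace H g β) {lam : Module.Dual ℂ H}
    (hlam : ∀ β ∈ Rplus, cwtSpace A H V (lam + β) = ⊥) (a : A) {y : g} (hy : y ∈ npos) {v : V}
    (hv : v ∈ cwtSpace A H V lam) : ⁅a ⊗ₜ[ℂ] y, v⁆ = 0 := by
  have h : ⁅a ⊗ₜ[ℂ] y, v⁆ ∈ ⨆ β ∈ Rplus, cwtSpace A H V (lam + β) :=
    lie_tmul_mem_biSup_cwtSpace (f := id) (hnpos hy) a hv
  rwa [iSup₂_eq_bot.mpr hlam, Submodule.mem_bot] at h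

theorem lie_tmul_mem_biSup_cwtSpace_sub {Q : AddSubmonoid (Module.Dual ℂ H)}
    (hQ : ∀ q ∈ Q, -q ∈ Q → q = 0) {Rplus : Set (Module.Dual ℂ H)}
    (hR : ∀ β ∈ Rplus, β ∈ Q ∧ β ≠ 0) {nneg : Submodule ℂ g}
    (hnneg : nneg ≤ ⨆ β ∈ Rplus, wtSpace H g (-β)) (lam : Module.Dual ℂ H) (a : A) {x : g}
    (hx : x ∈ nneg) {w : V} (hw : w ∈ ⨆ μ ∈ {μ | lam - μ ∈ Q}, cwtSpace A H V μ) :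
    ⁅a ⊗ₜ[ℂ] x, w⁆ ∈ ⨆ μ ∈ {μ | lam - μ ∈ Q ∧ μ ≠ lam}, cwtSpace A H V μ := by
  refine (LieModule.toEnd ℂ (A ⊗[ℂ] g) V (a ⊗ₜ x)).apply_mem_of_mem_biSup
    (fun μ (hμ : lam - μ ∈ Q) v hv ↦ ?_) hw
  refine (iSup₂_le fun β hβ ↦ le_biSup (cwtSpace A H V) (s := {ν | lam - ν ∈ Q ∧ ν ≠ lam})
    ⟨?_, fun h ↦ (hR β hβ).2 ?_⟩ : ⨆ β ∈ Rplus, cwtSpace A H V (μ + -β) ≤ _)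
    (lie_tmul_mem_biSup_cwtSpace (hnneg hx) a hv)
  · rw [show lam - (μ + -β) = lam - μ + β by abel]
    exact Q.add_mem hμ (hR β hβ).1
  · refine hQ β (hR β hβ).1 ?_
    rwa [show -β = lam - μ by rw [← h]; abel]

theorem stableSpan_sup_le_biSup_cwtSpace [IsLieAbelian H] {Q : AddSubmonoid (Module.Dual ℂ H)}
    {lam : Module.Dual ℂ H} {v : V} (hv : v ∈ cwtSpace A H V lam) :
    stableSpan ℂ (tmulSet A (H : Set g)) v ⊔
        ⨆ μ ∈ {μ | lam - μ ∈ Q ∧ μ ≠ lam}, cwtSpace A H V μ ≤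
      ⨆ μ ∈ {μ | lam - μ ∈ Q}, cwtSpace A H V μ :=
  sup_le ((stableSpan_le_cwtSpace hv).trans (le_biSup (cwtSpace A H V) (i := lam) (by simp)))
    (biSup_mono fun _ hμ ↦ hμ.1)

/-- `V = U(A ⊗ n⁻) U(A ⊗ h) v`, and `A ⊗ n⁻` strictly lowers weights. -/
theorem stableSpan_sup_biSup_cwtSpace_eq_top [IsLieAbelian H]
    [LieModule.IsIrreducible ℂ (A ⊗[ℂ] g) V] {Q : AddSubmonoid (Module.Dual ℂ H)}
    (hQ : ∀ q ∈ Q, -q ∈ Q → q = 0) {Rplus : Set (Module.Dual ℂ H)}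
    (hR : ∀ β ∈ Rplus, β ∈ Q ∧ β ≠ 0) {npos nneg : Submodule ℂ g}
    (hnpos : npos ≤ ⨆ β ∈ Rplus, wtSpace H g β) (hnneg : nneg ≤ ⨆ β ∈ Rplus, wtSpace H g (-β))
    (hdec : nneg ⊔ H.toSubmodule ⊔ npos = ⊤) {lam : Module.Dual ℂ H}
    (hlam : ∀ β ∈ Rplus, cwtSpace A H V (lam + β) = ⊥) {v : V} (hv : v ∈ cwtSpace A H V lam)
    (hv0 : v ≠ 0) :
    stableSpan ℂ (tmulSet A (H : Set g)) v ⊔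
      ⨆ μ ∈ {μ | lam - μ ∈ Q ∧ μ ≠ lam}, cwtSpace A H V μ = ⊤ := by
  have hspan : Submodule.span ℂ (tmulSet A ((nneg : Set g) ∪ H) ∪ tmulSet A npos) = ⊤ := by
    rw [tmulSet, tmulSet, ← Set.image2_union_right]
    refine TensorProduct.span_image2_tmul_univ_eq_top ?_
    rwa [Submodule.span_union, Submodule.span_union, Submodule.span_eq, Submodule.span_eq,
      ← LieSubalgebra.coe_toSubmodule, Submodule.span_eq]
  have hgen := stableSpan_eq_top hspan (by
    rintro _ ⟨a, -, y, hy, rfl⟩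
    exact lie_tmul_eq_zero_of_forall_cwtSpace_add_eq_bot hnpos hlam a hy hv) hv0
  rw [eq_top_iff, ← hgen]
  refine stableSpan_le (Submodule.mem_sup_left (mem_stableSpan_self _ v)) ?_
  rintro _ ⟨a, -, x, hx | hx, rfl⟩ w hw
  · exact Submodule.mem_sup_right (lie_tmul_mem_biSup_cwtSpace_sub hQ hR hnneg lam a hx
      (stableSpan_sup_le_biSup_cwtSpace hv hw))
  · obtain ⟨w₁, hw₁, w₂, hw₂, rfl⟩ := Submodule.mem_sup.mp hw
    rw [lie_add]
    exact Submodule.add_mem_sup (lie_mem_stableSpan (tmul_mem_tmulSet a hx) hw₁)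
      (lie_tmul_mem_biSup_cwtSpace_of_mem a hx hw₂)

theorem cwtSpace_eq_stableSpan_of_sup_eq_top [IsLieAbelian H] {lam : Module.Dual ℂ H}
    {T : Set (Module.Dual ℂ H)} (hT : lam ∉ T) {v : V} (hv : v ∈ cwtSpace A H V lam)
    (htop : stableSpan ℂ (tmulSet A (H : Set g)) v ⊔
      ⨆ μ ∈ T, cwtSpace A H V μ = ⊤) :
    cwtSpace A H V lam = stableSpan ℂ (tmulSet A (H : Set g)) v := by
  have hdisj := (iSupIndep_cwtSpace (A := A) (V := V)).disjoint_biSup hT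
  calc cwtSpace A H V lam
        = cwtSpace A H V lam ⊓ (stableSpan ℂ _ v ⊔ ⨆ μ ∈ T, cwtSpace A H V μ) := by
        rw [htop, inf_top_eq]
    _ = stableSpan ℂ _ v ⊔ cwtSpace A H V lam ⊓ ⨆ μ ∈ T, cwtSpace A H V μ := by
        rw [inf_comm, sup_inf_assoc_of_le _ (stableSpan_le_cwtSpace hv), inf_comm]
    _ = stableSpan ℂ _ v := by rw [hdisj.eq_bot, sup_bot_eq]

theorem sub_mem_of_cwtSpace_ne_bot [IsLieAbelian H] {Q : AddSubmonoid (Module.Dual ℂ H)}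
    {lam : Module.Dual ℂ H} {v : V} (hv : v ∈ cwtSpace A H V lam)
    (htop : stableSpan ℂ (tmulSet A (H : Set g)) v ⊔
      ⨆ μ ∈ {μ | lam - μ ∈ Q ∧ μ ≠ lam}, cwtSpace A H V μ = ⊤)
    {χ : Module.Dual ℂ H} (hχ : cwtSpace A H V χ ≠ ⊥) : lam - χ ∈ Q := by
  by_contra hχQ
  refine hχ ((iSupIndep_cwtSpace.disjoint_biSup (y := {μ | lam - μ ∈ Q}) hχQ).eq_bot_of_le ?_)
  exact le_top.trans (htop ▸ stableSpan_sup_le_biSup_cwtSpace hv)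

theorem exists_cwtSpace_ne_bot_forall_add_eq_bot [IsLieAbelian H] [FiniteDimensional ℂ V]
    [Nontrivial V] (hdecomp : ⨆ χ, cwtSpace A H V χ = ⊤) {Q : AddSubmonoid (Module.Dual ℂ H)}
    (hQ : ∀ q ∈ Q, -q ∈ Q → q = 0) {Rplus : Set (Module.Dual ℂ H)}
    (hR : ∀ β ∈ Rplus, β ∈ Q ∧ β ≠ 0) :
    ∃ lam, cwtSpace A H V lam ≠ ⊥ ∧ ∀ β ∈ Rplus, cwtSpace A H V (lam + β) = ⊥ := by
  obtain ⟨χ, hχ⟩ : ∃ χ, cwtSpace A H V χ ≠ ⊥ := by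
    by_contra! h
    simp [h] at hdecomp
  obtain ⟨lam, hlam, hmax⟩ :=
    finite_setOf_cwtSpace_ne_bot.exists_maximal_wrt_addSubmonoid hQ ⟨χ, hχ⟩
  refine ⟨lam, hlam, fun β hβ ↦ ?_⟩
  by_contra h
  exact (hR β hβ).2 (by simpa using hmax _ h (by simpa using (hR β hβ).1))

end HighestWeight

/-- Let `g` be a finite-dimensional complex simple Lie algebra with triangular
decomposition `g = n⁻ ⊕ h ⊕ n⁺`, `A` a commutative unital `ℂ`-algebra, and `V` a
finite-dimensional irreducible `g⊗A`-module which is a sum of weight spaces.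
Then there is a weight `λ` of `V` with `dim V_λ = 1` and `wt(V) ⊆ λ − Q⁺`. -/
theorem stmt8 (g : Type*) [LieRing g] [LieAlgebra ℂ g]
    [FiniteDimensional ℂ g] [LieAlgebra.IsSimple ℂ g]
    (H : LieSubalgebra ℂ g) [H.IsCartanSubalgebra]
    (n : ℕ) (α : Fin n → Module.Dual ℂ H) (hα : LinearIndependent ℂ α)
    (Rplus : Set (Module.Dual ℂ H))
    (hR : ∀ β ∈ Rplus, β ∈ AddSubmonoid.closure (Set.range α) ∧ β ≠ 0)
    (npos nneg : LieSubalgebra ℂ g)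
    (hnpos : npos.toSubmodule = ⨆ β ∈ Rplus, wtSpace H g β)
    (hnneg : nneg.toSubmodule = ⨆ β ∈ Rplus, wtSpace H g (-β))
    (hdecg : nneg.toSubmodule ⊔ H.toSubmodule ⊔ npos.toSubmodule = ⊤)
    (A : Type*) [CommRing A] [Algebra ℂ A]
    (V : Type*) [AddCommGroup V] [Module ℂ V] [FiniteDimensional ℂ V]
    [LieRingModule (A ⊗[ℂ] g) V] [LieModule ℂ (A ⊗[ℂ] g) V]
    (hirr : LieModule.IsIrreducible ℂ (A ⊗[ℂ] g) V)
    (hdecomp : ⨆ χ : Module.Dual ℂ H, cwtSpace A H V χ = ⊤) :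
    ∃ lam : Module.Dual ℂ H, cwtSpace A H V lam ≠ ⊥ ∧
      Module.finrank ℂ (cwtSpace A H V lam) = 1 ∧
      ∀ χ : Module.Dual ℂ H, cwtSpace A H V χ ≠ ⊥ →
        lam - χ ∈ AddSubmonoid.closure (Set.range α) := by
  have := hirr
  have : Nontrivial V := LieModule.nontrivial_of_isIrreducible ℂ (A ⊗[ℂ] g) V
  have hQ (q) (hq : q ∈ AddSubmonoid.closure (Set.range α)) (hq' : -q ∈ _) : q = 0 :=
    eq_zero_of_mem_closure_range_of_neg_mem (hα.restrict_scalars' ℕ) hq hq'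
  obtain ⟨lam, hlam, hlam_top⟩ := exists_cwtSpace_ne_bot_forall_add_eq_bot hdecomp hQ hR
  have htop {v : V} (hv : v ∈ cwtSpace A H V lam) (hv0 : v ≠ 0) :=
    stableSpan_sup_biSup_cwtSpace_eq_top hQ hR hnpos.le hnneg.le hdecg hlam_top hv hv0
  have hgen (v : V) (hv : v ∈ cwtSpace A H V lam) (hv0 : v ≠ 0) :=
    (cwtSpace_eq_stableSpan_of_sup_eq_top (fun h ↦ h.2 rfl) hv (htop hv hv0)).symm
  obtain ⟨v, hv, hv0⟩ := Submodule.exists_mem_ne_zero_of_ne_bot hlam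
  exact ⟨lam, hlam, finrank_eq_one_of_forall_stableSpan_eq lie_eq_zero_of_mem_tmulSet hlam hgen,
    fun χ hχ ↦ sub_mem_of_cwtSpace_ne_bot hv (htop hv hv0) hχ⟩
end
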